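/- arXiv:1510.03419 — 2 statements merged into one kernel-verified Lean document; each statement's English description precedes it below -/
import Mathlib

section
/- Let K be a finite abelian group and consider a Mermin measurement scenario with data (K, a, M, n, N, n₀, R) as in the context. The associated empirical model is All-vs-Nothing with respect to ℤ and K (AvN_{ℤ,K}) — i.e. there is NO global assignment s : ZMod N × Fin (M+1) → K such that (a) for every m : ZMod N → ℤ and b ∈ K with the property that every w : ZMod N → K with ∑_i w i = 0 satisfies ∑_i (m i) • w i = b, one has ∑_i (m i) • s (i, 0) = b, and (b) for every v : ZMod N and every m : ZMod N → ℤ and b ∈ K with the property that every w : ZMod N → K with ∑_i w i = a satisfies ∑_i (m i) • w i = b, one has ∑_i (m i) • s (i, R (i + v)) = b — if and only if there is no y : Fin M → K with ∑_{r : Fin M} (n r) • y r = a. -/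
/-!
Both directions come down to the single equation obtained from the all-ones coefficient vector.
A solution `y` gives the global assignment `s (i, k) = y (k - 1)` (and `0` for `k = 0`): every
variation context then sees a point of its support, since the fibre of `R` over `r + 1` has
`n r` elements. Conversely, a global assignment has control sum `0` and every variation sum
equal to `a`; adding the `N` variation sums counts each measurement `(i, r + 1)` exactly `n r`
times, so `y r := ∑ i, s (i, r + 1)` solves `∑ r, n r • y r = N • a = a`.
-/

open Finset

section FibreSum

variable {K : Type} [AddCommGroup K] {M : ℕ} {n : Fin M → ℕ}

theorem sum_comp_eq_sum_nsmul_succ {ι : Type*} [Fintype ι] {R : ι → Fin (M + 1)}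
    (hRr : ∀ r : Fin M, (univ.filter fun i => R i = r.succ).card = n r)
    (f : Fin (M + 1) → K) (hf : f 0 = 0) :
    ∑ i, f (R i) = ∑ r, n r • f r.succ := by
  rw [← sum_fiberwise' univ R f, Fin.sum_univ_succ]
  simp only [sum_const, hf, smul_zero, zero_add, hRr]

variable {N : ℕ} [NeZero N] {R : ZMod N → Fin (M + 1)}

theorem sum_finCases_comp_add
    (hRr : ∀ r : Fin M, (univ.filter fun i : ZMod N => R i = r.succ).card = n r)
    (y : Fin M → K) (v : ZMod N) :
    ∑ i, (Fin.cases 0 y (R (i + v)) : K) = ∑ r, n r • y r :=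
  (Equiv.sum_comp (Equiv.addRight v) fun j => (Fin.cases 0 y (R j) : K)).trans
    (sum_comp_eq_sum_nsmul_succ hRr _ rfl)

theorem sum_nsmul_sum_succ_eq
    (hRr : ∀ r : Fin M, (univ.filter fun i : ZMod N => R i = r.succ).card = n r)
    {a : K} (hexp : N • a = a) (s : ZMod N × Fin (M + 1) → K)
    (hcontrol : ∑ i, s (i, 0) = 0) (hvariation : ∀ v, ∑ i, s (i, R (i + v)) = a) :
    ∑ r, n r • ∑ i, s (i, r.succ) = a :=
  calc ∑ r, n r • ∑ i, s (i, r.succ)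
      = ∑ j, ∑ i, s (i, R j) :=
        (sum_comp_eq_sum_nsmul_succ hRr (fun k => ∑ i, s (i, k)) hcontrol).symm
    _ = ∑ i, ∑ v, s (i, R (i + v)) := by
        rw [sum_comm]
        exact sum_congr rfl fun i _ => (Equiv.sum_comp (Equiv.addLeft i) fun j => s (i, R j)).symm
    _ = ∑ _v : ZMod N, a := by rw [sum_comm]; exact sum_congr rfl fun v _ => hvariation v
    _ = a := by rw [sum_const, card_univ, ZMod.card, hexp]

end FibreSum

theorem mermin_AvN_iff_no_solution_general
    {K : Type} [AddCommGroup K]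
    (a : K) (M : ℕ) (n : Fin M → ℕ)
    (N : ℕ) [NeZero N]
    (hexp : ∀ x : K, N • x = x)
    (R : ZMod N → Fin (M + 1))
    (hRr : ∀ r : Fin M, (Finset.univ.filter fun i : ZMod N => R i = r.succ).card = n r) :
    (¬ ∃ s : ZMod N × Fin (M + 1) → K,
      (∀ (m : ZMod N → ℤ) (b : K),
        (∀ w : ZMod N → K, (∑ i : ZMod N, w i = 0) → ∑ i : ZMod N, m i • w i = b) →
          ∑ i : ZMod N, m i • s (i, 0) = b) ∧
      (∀ (v : ZMod N) (m : ZMod N → ℤ) (b : K),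
        (∀ w : ZMod N → K, (∑ i : ZMod N, w i = a) → ∑ i : ZMod N, m i • w i = b) →
          ∑ i : ZMod N, m i • s (i, R (i + v)) = b))
    ↔ ¬ ∃ y : Fin M → K, ∑ r, n r • y r = a := by
  refine not_congr ⟨fun ⟨s, hcontrol, hvariation⟩ => ?_, fun ⟨y, hy⟩ => ?_⟩
  · have h0 : ∑ i, s (i, 0) = 0 := by
      simpa using hcontrol (fun _ => 1) 0 fun w hw => by simpa using hw
    have ha : ∀ v, ∑ i, s (i, R (i + v)) = a := fun v => by
      simpa using hvariation v (fun _ => 1) a fun w hw => by simpa using hw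
    exact ⟨_, sum_nsmul_sum_succ_eq hRr (hexp a) s h0 ha⟩
  · refine ⟨fun p => Fin.cases 0 y p.2, fun m b hb => ?_, fun v m b hb => ?_⟩
    · simpa using hb 0 (by simp)
    · exact hb _ ((sum_finCases_comp_add hRr y v).trans hy)

/-- The Mermin empirical model is All-vs-Nothing with respect to `ℤ` and `K`
(i.e. no global assignment satisfies all the `ℤ`-linear equations satisfied by the supports of
all measurement contexts) if and only if the equation `⊕_r n_r • y_r = a` has no solution
in `K`. -/
theorem mermin_AvN_iff_no_solution
    {K : Type} [AddCommGroup K] [Fintype K]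
    (a : K) (M : ℕ) (hM : 1 ≤ M) (n : Fin M → ℕ) (hn : ∀ r, 1 ≤ n r)
    (N : ℕ) [NeZero N] (hN : 1 ≤ N) (hsum : ∑ r, n r ≤ N)
    (hexp : ∀ x : K, N • x = x)
    (R : ZMod N → Fin (M + 1))
    (hR0 : (Finset.univ.filter fun i : ZMod N => R i = 0).card = N - ∑ r, n r)
    (hRr : ∀ r : Fin M, (Finset.univ.filter fun i : ZMod N => R i = r.succ).card = n r) :
    (¬ ∃ s : ZMod N × Fin (M + 1) → K,
      (∀ (m : ZMod N → ℤ) (b : K),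
        (∀ w : ZMod N → K, (∑ i : ZMod N, w i = 0) → ∑ i : ZMod N, m i • w i = b) →
          ∑ i : ZMod N, m i • s (i, 0) = b) ∧
      (∀ (v : ZMod N) (m : ZMod N → ℤ) (b : K),
        (∀ w : ZMod N → K, (∑ i : ZMod N, w i = a) → ∑ i : ZMod N, m i • w i = b) →
          ∑ i : ZMod N, m i • s (i, R (i + v)) = b))
    ↔ ¬ ∃ y : Fin M → K, ∑ r, n r • y r = a :=
  mermin_AvN_iff_no_solution_general a M n N hexp R hRr
end

section
/- Let P be a divisible abelian group, i.e. for every nonzero integer k the map x ↦ k • x is surjective on P. Then every consistent finite system of ℤ-module equations valued in P has a solution in P: given n : Fin S → Fin M → ℤ and a : Fin S → P such that for every c : Fin S → ℤ with ∑_s (c s) * (n s r) = 0 for all r : Fin M one has ∑_s (c s) • (a s) = 0, there exists β : Fin M → P with ∑_{r : Fin M} (n s r) • β r = a s for every s : Fin S. -/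
/-!
Over `ℤ` a divisible group is an injective module (Baer's criterion). Consistency says that
`c ↦ ∑ s, c s • a s` vanishes on the kernel of `c ↦ ∑ s, c s • n s`, so it factors through the
latter map, and by injectivity the factorisation extends to a linear map `h : (Fin M → ℤ) → P`.
The solution is `β r = h (Pi.single r 1)`.
-/

universe u v

theorem Module.Injective.exists_comp_eq_of_ker_le {R : Type u} [Ring R] {M N : Type*}
    [AddCommGroup M] [Module R M] [AddCommGroup N] [Module R N] {Q : Type v} [AddCommGroup Q]
    [Module R Q] [Small.{v} R] [Module.Injective R Q] (f : M →ₗ[R] N) (g : M →ₗ[R] Q)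
    (hfg : LinearMap.ker f ≤ LinearMap.ker g) : ∃ h : N →ₗ[R] Q, h ∘ₗ f = g := by
  obtain ⟨h, hh⟩ := Module.Injective.extension_property R Q _ _
    ((LinearMap.ker f).liftQ f le_rfl)
    (LinearMap.ker_eq_bot.mp ((LinearMap.ker f).ker_liftQ_eq_bot f le_rfl le_rfl))
    ((LinearMap.ker f).liftQ g hfg)
  refine ⟨h, ?_⟩
  rw [← (LinearMap.ker f).liftQ_mkQ f le_rfl, ← LinearMap.comp_assoc, hh,
    Submodule.liftQ_mkQ]

theorem Module.Injective.exists_sum_smul_eq_of_consistent {R : Type u} [Ring R] {Q : Type v}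
    [AddCommGroup Q] [Module R Q] [Small.{v} R] [Module.Injective R Q]
    {ι κ : Type*} [Fintype ι] [Fintype κ]
    (n : ι → κ → R) (a : ι → Q)
    (hconsistent : ∀ c : ι → R, (∀ r, ∑ s, c s * n s r = 0) → ∑ s, c s • a s = 0) :
    ∃ β : κ → Q, ∀ s, ∑ r, n s r • β r = a s := by
  classical
  obtain ⟨h, hh⟩ := exists_comp_eq_of_ker_le (Fintype.linearCombination R n)
    (Fintype.linearCombination R a) fun c hc ↦ hconsistent c fun r ↦ by
      simpa [Fintype.linearCombination_apply] using congrFun hc r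
  refine ⟨fun r ↦ h (Pi.single r 1), fun s ↦ ?_⟩
  calc ∑ r, n s r • h (Pi.single r 1) = h (n s) := by
        simp_rw [← map_smul, ← map_sum, ← Pi.single_smul', smul_eq_mul, mul_one,
          Finset.univ_sum_single]
    _ = (h ∘ₗ Fintype.linearCombination R n) (Pi.single s 1) := by simp
    _ = a s := by simp [hh]

/-- every consistent finite system of `ℤ`-module equations valued in a divisible
abelian group `P` has a solution in `P`. -/
theorem divisible_group_consistent_system_has_solution
    {P : Type} [AddCommGroup P]
    (hdiv : ∀ k : ℤ, k ≠ 0 → Function.Surjective (fun x : P => k • x))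
    (S M : ℕ) (n : Fin S → Fin M → ℤ) (a : Fin S → P)
    (hconsistent : ∀ c : Fin S → ℤ,
      (∀ r : Fin M, ∑ s, c s * n s r = 0) → ∑ s, c s • a s = 0) :
    ∃ β : Fin M → P, ∀ s : Fin S, ∑ r, n s r • β r = a s := by
  let : DivisibleBy P ℤ := divisibleByOfSMulRightSurj P ℤ (hdiv _)
  have : Module.Injective ℤ P := (Module.Baer.of_divisible P).injective
  exact Module.Injective.exists_sum_smul_eq_of_consistent n a hconsistent
end
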